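/- arXiv:2306.16387 — 3 statements merged into one kernel-verified Lean document; each statement's English description precedes it below -/
import Mathlib

section
/- Let Ω be a compact metric space, T : Ω → Ω a minimal homeomorphism, and V : Ω → ℂ continuous. For x ∈ Ω let H_x be the bounded operator on ℓ²(ℤ) given by (H_x u)_n = u_{n+1} + u_{n-1} + V(Tⁿ x) u_n. Then the spectrum of H_x is independent of x: there exists Σ ⊆ ℂ with Σ_x = Σ for all x ∈ Ω. -/
open Filter
open scoped ENNReal Topology

noncomputable section SpectrumConstantAux

namespace SpectrumConstantAux

local notation "ℓ2" => lp (fun _ : ℤ => ℂ) 2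

lemma htp : (0:ℝ) < (2:ℝ≥0∞).toReal := by norm_num

lemma memℓp_reindex (e : ℤ ≃ ℤ) (u : ℓ2) : Memℓp (fun n => u (e n)) 2 := by
  rw [memℓp_gen_iff htp]
  exact (e.summable_iff (f := fun n => ‖u n‖ ^ (2:ℝ≥0∞).toReal)).2
    ((memℓp_gen_iff htp).1 (lp.memℓp u))

def shiftLM (e : ℤ ≃ ℤ) : ℓ2 →ₗ[ℂ] ℓ2 where
  toFun u := ⟨fun n => u (e n), memℓp_reindex e u⟩
  map_add' u v := by
    apply lp.ext; funext n
    simp [lp.coeFn_add]; rfl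
  map_smul' c u := by
    apply lp.ext; funext n
    simp [lp.coeFn_smul]

lemma shiftLM_apply (e : ℤ ≃ ℤ) (u : ℓ2) (n : ℤ) :
    (shiftLM e u : ∀ _ : ℤ, ℂ) n = u (e n) := rfl

lemma norm_shiftLM (e : ℤ ≃ ℤ) (u : ℓ2) : ‖shiftLM e u‖ = ‖u‖ := by
  rw [lp.norm_eq_tsum_rpow htp, lp.norm_eq_tsum_rpow htp u]
  congr 1
  exact e.tsum_eq (f := fun n => ‖u n‖ ^ (2:ℝ≥0∞).toReal)

def shiftCLM (e : ℤ ≃ ℤ) : ℓ2 →L[ℂ] ℓ2 :=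
  (shiftLM e).mkContinuous 1 (fun u => by rw [norm_shiftLM]; simp)

lemma shiftCLM_apply (e : ℤ ≃ ℤ) (u : ℓ2) (n : ℤ) :
    (shiftCLM e u : ∀ _ : ℤ, ℂ) n = u (e n) := rfl

lemma norm_shiftCLM (e : ℤ ≃ ℤ) (u : ℓ2) : ‖shiftCLM e u‖ = ‖u‖ := norm_shiftLM e u

section Conj

variable {Ω : Type*}
  (T : Equiv.Perm Ω) (V : Ω → ℂ)
  (H : Ω → (ℓ2 →L[ℂ] ℓ2))
  (hH : ∀ (x : Ω) (u : ℓ2) (n : ℤ),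
      (H x u : ∀ _ : ℤ, ℂ) n = u (n + 1) + u (n - 1) + V ((T ^ n) x) * u n)

include hH in
lemma conj_exists (m : ℤ) (y : Ω) :
    ∃ P Q : ℓ2 →L[ℂ] ℓ2, P * Q = 1 ∧ Q * P = 1 ∧
      (∀ u, ‖P u‖ = ‖u‖) ∧ (∀ u, ‖Q u‖ = ‖u‖) ∧ H ((T ^ m) y) = P * H y * Q := by
  set S : ℓ2 →L[ℂ] ℓ2 := shiftCLM (Equiv.addRight 1) with hSdef
  set S' : ℓ2 →L[ℂ] ℓ2 := shiftCLM (Equiv.subRight 1) with hS'def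
  have hSa : ∀ (u : ℓ2) (n : ℤ), (S u : ∀ _ : ℤ, ℂ) n = u (n + 1) := fun u n =>
    shiftCLM_apply _ u n
  have hS'a : ∀ (u : ℓ2) (n : ℤ), (S' u : ∀ _ : ℤ, ℂ) n = u (n - 1) := fun u n =>
    shiftCLM_apply _ u n
  have hSS' : S * S' = 1 := by
    apply ContinuousLinearMap.ext; intro u; apply lp.ext; funext n
    rw [ContinuousLinearMap.mul_apply, hSa, hS'a]
    simp
  have hS'S : S' * S = 1 := by
    apply ContinuousLinearMap.ext; intro u; apply lp.ext; funext n
    rw [ContinuousLinearMap.mul_apply, hS'a, hSa]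
    simp
  have hzp : ∀ (n : ℤ) (y : Ω), (T ^ (n + 1)) y = (T ^ n) (T y) := by
    intro n y; rw [zpow_add_one]; rfl
  have hstep : ∀ y : Ω, H (T y) = S * H y * S' := by
    intro y
    apply ContinuousLinearMap.ext; intro u; apply lp.ext; funext n
    rw [ContinuousLinearMap.mul_apply, ContinuousLinearMap.mul_apply, hSa,
      hH y _ (n + 1), hS'a, hS'a, hS'a, hH (T y) u n, ← hzp]
    simp only [add_sub_cancel_right]
  have hrev : ∀ y : Ω, H y = S' * H (T y) * S := by
    intro y
    rw [hstep y]
    have : S' * (S * H y * S') * S = (S' * S) * (H y * (S' * S)) := by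
      simp only [mul_assoc]
    rw [this, hS'S, one_mul, mul_one]
  induction m using Int.induction_on generalizing y with
  | zero => exact ⟨1, 1, by simp, by simp, by simp, by simp, by simp⟩
  | succ i ih =>
    obtain ⟨P, Q, h1, h2, h3, h4, h5⟩ := ih (T y)
    refine ⟨P * S, S' * Q, ?_, ?_, ?_, ?_, ?_⟩
    · have : P * S * (S' * Q) = P * ((S * S') * Q) := by simp only [mul_assoc]
      rw [this, hSS', one_mul, h1]
    · have : S' * Q * (P * S) = S' * ((Q * P) * S) := by simp only [mul_assoc]
      rw [this, h2, one_mul, hS'S]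
    · intro u
      rw [ContinuousLinearMap.mul_apply, h3, norm_shiftCLM]
    · intro u
      rw [ContinuousLinearMap.mul_apply, norm_shiftCLM, h4]
    · have hy : (T ^ ((i : ℤ) + 1)) y = (T ^ (i : ℤ)) (T y) := hzp _ y
      rw [hy, h5, hstep y]
      simp only [mul_assoc]
  | pred i ih =>
    obtain ⟨P, Q, h1, h2, h3, h4, h5⟩ := ih (T.symm y)
    refine ⟨P * S', S * Q, ?_, ?_, ?_, ?_, ?_⟩
    · have : P * S' * (S * Q) = P * ((S' * S) * Q) := by simp only [mul_assoc]
      rw [this, hS'S, one_mul, h1]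
    · have : S * Q * (P * S') = S * ((Q * P) * S') := by simp only [mul_assoc]
      rw [this, h2, one_mul, hSS']
    · intro u
      rw [ContinuousLinearMap.mul_apply, h3, norm_shiftCLM]
    · intro u
      rw [ContinuousLinearMap.mul_apply, norm_shiftCLM, h4]
    · have hy : (T ^ (-(i : ℤ) - 1)) y = (T ^ (-(i : ℤ))) (T.symm y) := by
        rw [zpow_sub_one]; rfl
      have hy2 : H (T.symm y) = S' * H y * S := by
        have := hrev (T.symm y)
        rwa [T.apply_symm_apply] at this
      rw [hy, h5, hy2]
      simp only [mul_assoc]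

end Conj

lemma key_tendsto
    {Ω : Type*} [MetricSpace Ω]
    (T : Equiv.Perm Ω) (hTn : ∀ n : ℤ, Continuous fun ω => (T ^ n) ω)
    (V : Ω → ℂ) (hV : Continuous V) (M : ℝ) (hM : ∀ ω, ‖V ω‖ ≤ M)
    (x : Ω) (w : ℕ → Ω) (hw : Tendsto w atTop (𝓝 x))
    (c : ℓ2) (e : ℕ → ℓ2)
    (he : ∀ i n, ‖(e i : ∀ _ : ℤ, ℂ) n‖
      = ‖V ((T ^ n) (w i)) - V ((T ^ n) x)‖ * ‖(c : ∀ _ : ℤ, ℂ) n‖) :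
    Tendsto (fun i => ‖e i‖) atTop (𝓝 0) := by
  set t : ℝ := (2:ℝ≥0∞).toReal with ht
  have hM0 : 0 ≤ M := le_trans (norm_nonneg _) (hM x)
  have hsumc : Summable (fun n : ℤ => ‖(c : ∀ _ : ℤ, ℂ) n‖ ^ t) :=
    ((lp.hasSum_norm htp c).summable)
  have hbound : Summable (fun n : ℤ => (2*M) ^ t * ‖(c : ∀ _ : ℤ, ℂ) n‖ ^ t) :=
    hsumc.mul_left _
  have hts : Tendsto (fun i => ∑' n : ℤ, ‖(e i : ∀ _ : ℤ, ℂ) n‖ ^ t) atTop (𝓝 0) := by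
    have := tendsto_tsum_of_dominated_convergence (𝓕 := atTop)
      (f := fun i (n : ℤ) => ‖(e i : ∀ _ : ℤ, ℂ) n‖ ^ t)
      (g := fun _ : ℤ => (0:ℝ))
      (bound := fun n : ℤ => (2*M) ^ t * ‖(c : ∀ _ : ℤ, ℂ) n‖ ^ t)
      hbound ?_ ?_
    · simpa using this
    · intro n
      have h1 : Tendsto (fun i => V ((T ^ n) (w i))) atTop (𝓝 (V ((T ^ n) x))) :=
        ((hV.comp (hTn n)).tendsto x).comp hw
      have h2 : Tendsto (fun i => ‖V ((T ^ n) (w i)) - V ((T ^ n) x)‖ * ‖(c : ∀ _ : ℤ, ℂ) n‖)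
          atTop (𝓝 0) := by
        have := ((h1.sub (tendsto_const_nhds (x := V ((T ^ n) x)))).norm.mul_const
          (‖(c : ∀ _ : ℤ, ℂ) n‖))
        simpa using this
      have h3 : Tendsto (fun i => (‖V ((T ^ n) (w i)) - V ((T ^ n) x)‖
          * ‖(c : ∀ _ : ℤ, ℂ) n‖) ^ t) atTop (𝓝 0) := by
        have := h2.rpow_const (p := t) (Or.inr (by norm_num [ht]))
        rwa [Real.zero_rpow (by norm_num [ht])] at this
      refine h3.congr fun i => ?_
      dsimp only
      rw [he]
    · refine Eventually.of_forall fun i => fun n => ?_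
      dsimp only
      rw [Real.norm_of_nonneg (Real.rpow_nonneg (norm_nonneg _) _), he,
        ← Real.mul_rpow (by positivity) (norm_nonneg _)]
      refine Real.rpow_le_rpow (by positivity) ?_ (by norm_num [ht])
      refine mul_le_mul_of_nonneg_right ?_ (norm_nonneg _)
      calc ‖V ((T ^ n) (w i)) - V ((T ^ n) x)‖
          ≤ ‖V ((T ^ n) (w i))‖ + ‖V ((T ^ n) x)‖ := norm_sub_le _ _
        _ ≤ M + M := add_le_add (hM _) (hM _)
        _ = 2*M := by ring
  have h4 : Tendsto (fun i => (∑' n : ℤ, ‖(e i : ∀ _ : ℤ, ℂ) n‖ ^ t) ^ (1/t)) atTop (𝓝 0) := by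
    have := hts.rpow_const (p := 1/t) (Or.inr (by norm_num [ht]))
    rwa [Real.zero_rpow (by norm_num [ht])] at this
  refine h4.congr fun i => ?_
  rw [← lp.norm_eq_tsum_rpow htp]

lemma cont_zpow {Ω : Type*} [TopologicalSpace Ω] (T : Equiv.Perm Ω)
    (hT : Continuous T) (hTinv : Continuous T.symm) :
    ∀ n : ℤ, Continuous fun ω => (T ^ n) ω := by
  intro n
  induction n using Int.induction_on with
  | zero => simpa using continuous_id'
  | succ i ih =>
    have h : ∀ ω : Ω, (T ^ ((i:ℤ)+1)) ω = (T ^ (i:ℤ)) (T ω) := fun ω => by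
      rw [zpow_add_one]; rfl
    simpa only [h, Function.comp_def] using ih.comp hT
  | pred i ih =>
    have h : ∀ ω : Ω, (T ^ (-(i:ℤ)-1)) ω = (T ^ (-(i:ℤ))) (T.symm ω) := fun ω => by
      rw [zpow_sub_one]; rfl
    simpa only [h, Function.comp_def] using ih.comp hTinv

end SpectrumConstantAux

local notation "ℓ2" => lp (fun _ : ℤ => ℂ) 2

set_option maxHeartbeats 2000000 in
open SpectrumConstantAux in
/-- Constancy of the spectrum for minimal (possibly non-self-adjoint) dynamically
defined Schrödinger operators: `Ω` a compact metric space, `T` a minimal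
homeomorphism, `V : Ω → ℂ` continuous, and for each `x` the bounded operator
`H x` on `ℓ²(ℤ)` acts by `(H x u) n = u (n+1) + u (n-1) + V (Tⁿ x) · u n`.
Then the spectrum of `H x` does not depend on `x`. -/
theorem spectrum_constant_of_minimal
    {Ω : Type*} [MetricSpace Ω] [CompactSpace Ω]
    (T : Equiv.Perm Ω) (hT : Continuous T) (hTinv : Continuous T.symm)
    (hmin : ∀ x : Ω, Dense (Set.range fun n : ℤ => (T ^ n) x))
    (V : Ω → ℂ) (hV : Continuous V)
    (H : Ω → (lp (fun _ : ℤ => ℂ) 2 →L[ℂ] lp (fun _ : ℤ => ℂ) 2))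
    (hH : ∀ (x : Ω) (u : lp (fun _ : ℤ => ℂ) 2) (n : ℤ),
      (H x u : ∀ _ : ℤ, ℂ) n = u (n + 1) + u (n - 1) + V ((T ^ n) x) * u n) :
    ∃ Spec : Set ℂ, ∀ x : Ω, spectrum ℂ (H x) = Spec := by
  classical
  rcases isEmpty_or_nonempty Ω with hemp | hne
  · exact ⟨∅, fun x => (hemp.false x).elim⟩
  obtain ⟨x₀⟩ := id hne
  obtain ⟨M, hM⟩ : ∃ M, ∀ ω : Ω, ‖V ω‖ ≤ M := by
    obtain ⟨ω₀, -, hω₀⟩ := isCompact_univ.exists_isMaxOn Set.univ_nonempty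
      hV.norm.continuousOn
    exact ⟨‖V ω₀‖, fun ω => hω₀ (Set.mem_univ ω)⟩
  have hTn := cont_zpow T hT hTinv
  suffices hsub : ∀ x y : Ω, spectrum ℂ (H x) ⊆ spectrum ℂ (H y) by
    exact ⟨spectrum ℂ (H x₀), fun x => Set.Subset.antisymm (hsub x x₀) (hsub x₀ x)⟩
  intro x y z hz
  by_contra hny
  rw [spectrum.mem_iff] at hz
  rw [spectrum.notMem_iff] at hny
  apply hz
  set a : ℓ2 →L[ℂ] ℓ2 := algebraMap ℂ _ z with ha
  obtain ⟨U, hU⟩ := hny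
  set B : ℓ2 →L[ℂ] ℓ2 := (↑U⁻¹ : ℓ2 →L[ℂ] ℓ2) with hB
  have hAB : (a - H y) * B = 1 := by rw [ha, ← hU, hB]; exact U.mul_inv
  have hBA : B * (a - H y) = 1 := by rw [ha, ← hU, hB]; exact U.inv_mul
  set C : ℝ := ‖B‖ with hC
  have hC0 : 0 ≤ C := norm_nonneg _
  obtain ⟨w, hwmem, hwx⟩ := mem_closure_iff_seq_limit.mp ((hmin y) x)
  -- per-index approximate inverses with uniform bound
  have hAi : ∀ i : ℕ, ∃ Bi : ℓ2 →L[ℂ] ℓ2,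
      ((a - H (w i)) * Bi = 1) ∧ (Bi * (a - H (w i)) = 1) ∧ ‖Bi‖ ≤ C := by
    intro i
    obtain ⟨mi, hmi⟩ := hwmem i
    obtain ⟨P, Q, hPQ, hQP, hPn, hQn, hrep⟩ := conj_exists T V H hH mi y
    rw [show (T ^ mi) y = w i from hmi] at hrep
    have haPQ : P * a * Q = a := by
      rw [ha, Algebra.algebraMap_eq_smul_one, mul_smul_comm, mul_one, smul_mul_assoc, hPQ]
    have hAconj : a - H (w i) = P * (a - H y) * Q := by
      rw [hrep, mul_sub, sub_mul, haPQ]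
    refine ⟨P * B * Q, ?_, ?_, ?_⟩
    · rw [hAconj]
      have h2 : (P * (a - H y) * Q) * (P * B * Q)
          = P * ((a - H y) * ((Q * P) * B)) * Q := by simp only [mul_assoc]
      rw [h2, hQP, one_mul, hAB, mul_one, hPQ]
    · rw [hAconj]
      have h2 : (P * B * Q) * (P * (a - H y) * Q)
          = P * (B * ((Q * P) * (a - H y))) * Q := by simp only [mul_assoc]
      rw [h2, hQP, one_mul, hBA, mul_one, hPQ]
    · apply ContinuousLinearMap.opNorm_le_bound _ hC0
      intro u
      rw [ContinuousLinearMap.mul_apply, ContinuousLinearMap.mul_apply, hPn]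
      calc ‖B (Q u)‖ ≤ ‖B‖ * ‖Q u‖ := B.le_opNorm _
        _ = C * ‖u‖ := by rw [hQn, hC]
  have hkey : ∀ (c : ℓ2) (e : ℕ → ℓ2),
      (∀ i n, ‖(e i : ∀ _ : ℤ, ℂ) n‖
        = ‖V ((T ^ n) (w i)) - V ((T ^ n) x)‖ * ‖(c : ∀ _ : ℤ, ℂ) n‖) →
      Tendsto (fun i => ‖e i‖) atTop (𝓝 0) :=
    fun c e he => key_tendsto T hTn V hV M hM x w hwx c e he
  have hDcoords : ∀ (i : ℕ) (u : ℓ2) (n : ℤ),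
      (((H (w i) - H x) u : ℓ2) : ∀ _ : ℤ, ℂ) n
        = (V ((T ^ n) (w i)) - V ((T ^ n) x)) * (u : ∀ _ : ℤ, ℂ) n := by
    intro i u n
    rw [ContinuousLinearMap.sub_apply, lp.coeFn_sub, Pi.sub_apply, hH, hH]
    ring
  set A : ℓ2 →L[ℂ] ℓ2 := a - H x with hAdef
  -- lower bound for A
  have hlbA : ∀ u : ℓ2, ‖u‖ ≤ C * ‖A u‖ := by
    intro u
    have htend : Tendsto (fun i => (a - H (w i)) u) atTop (𝓝 (A u)) := by
      rw [tendsto_iff_norm_sub_tendsto_zero]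
      refine (hkey u (fun i => (H (w i) - H x) u) ?_).congr fun i => ?_
      · intro i n
        rw [hDcoords, norm_mul]
      · have h5 : (a - H (w i)) u - A u = -(((H (w i) - H x)) u) := by
          rw [← ContinuousLinearMap.sub_apply, ← ContinuousLinearMap.neg_apply]
          congr 1
          rw [hAdef]
          abel
        rw [h5, norm_neg]
    have hnorm : Tendsto (fun i => C * ‖(a - H (w i)) u‖) atTop (𝓝 (C * ‖A u‖)) :=
      htend.norm.const_mul C
    refine ge_of_tendsto hnorm (Eventually.of_forall fun i => ?_)
    obtain ⟨Bi, h1, h2, h3⟩ := hAi i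
    have hu : Bi ((a - H (w i)) u) = u := by
      have := congrArg (fun f : ℓ2 →L[ℂ] ℓ2 => f u) h2
      simpa [ContinuousLinearMap.mul_apply] using this
    calc ‖u‖ = ‖Bi ((a - H (w i)) u)‖ := by rw [hu]
      _ ≤ ‖Bi‖ * ‖(a - H (w i)) u‖ := Bi.le_opNorm _
      _ ≤ C * ‖(a - H (w i)) u‖ := mul_le_mul_of_nonneg_right h3 (norm_nonneg _)
  -- adjoint coordinates of the difference
  have hDsingle : ∀ (i : ℕ) (n : ℤ),
      (H (w i) - H x) (lp.single 2 n 1)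
        = lp.single 2 n (V ((T ^ n) (w i)) - V ((T ^ n) x)) := by
    intro i n
    apply lp.ext; funext mm
    rw [hDcoords]
    by_cases hmn : mm = n
    · subst hmn
      rw [lp.single_apply_self, lp.single_apply_self, mul_one]
    · rw [lp.single_apply_ne _ _ _ hmn, lp.single_apply_ne _ _ _ hmn, mul_zero]
  have hadj : ∀ (i : ℕ) (v : ℓ2) (n : ℤ),
      ((ContinuousLinearMap.adjoint (H (w i) - H x) v : ℓ2) : ∀ _ : ℤ, ℂ) n
        = (starRingEnd ℂ) (V ((T ^ n) (w i)) - V ((T ^ n) x)) * (v : ∀ _ : ℤ, ℂ) n := by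
    intro i v n
    have h1 : (inner ℂ (lp.single 2 n (1:ℂ))
        (ContinuousLinearMap.adjoint (H (w i) - H x) v) : ℂ)
        = ((ContinuousLinearMap.adjoint (H (w i) - H x) v : ℓ2) : ∀ _ : ℤ, ℂ) n := by
      rw [lp.inner_single_left]
      simp [RCLike.inner_apply]
    rw [← h1, ContinuousLinearMap.adjoint_inner_right, hDsingle, lp.inner_single_left]
    simp [RCLike.inner_apply]; ring
  -- lower bound for adjoint of A
  have hlbAadj : ∀ v : ℓ2, ‖v‖ ≤ C * ‖ContinuousLinearMap.adjoint A v‖ := by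
    intro v
    have htend : Tendsto (fun i => ContinuousLinearMap.adjoint (a - H (w i)) v) atTop
        (𝓝 (ContinuousLinearMap.adjoint A v)) := by
      rw [tendsto_iff_norm_sub_tendsto_zero]
      refine (hkey v (fun i => ContinuousLinearMap.adjoint (H (w i) - H x) v) ?_).congr
        fun i => ?_
      · intro i n
        rw [hadj, norm_mul, RCLike.norm_conj]
      · have h5 : ContinuousLinearMap.adjoint (a - H (w i)) v
            - ContinuousLinearMap.adjoint A v
            = -(ContinuousLinearMap.adjoint (H (w i) - H x) v) := by
          rw [← ContinuousLinearMap.sub_apply, ← ContinuousLinearMap.neg_apply]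
          congr 1
          rw [← map_sub (ContinuousLinearMap.adjoint (𝕜 := ℂ) (E := ℓ2) (F := ℓ2)),
            ← map_neg (ContinuousLinearMap.adjoint (𝕜 := ℂ) (E := ℓ2) (F := ℓ2))]
          congr 1
          rw [hAdef]
          abel
        rw [h5, norm_neg]
    have hnorm := htend.norm.const_mul C
    refine ge_of_tendsto hnorm (Eventually.of_forall fun i => ?_)
    obtain ⟨Bi, h1, h2, h3⟩ := hAi i
    have hBA' : ContinuousLinearMap.adjoint Bi
        * ContinuousLinearMap.adjoint (a - H (w i)) = 1 := by
      have := congrArg (fun X : ℓ2 →L[ℂ] ℓ2 => ContinuousLinearMap.adjoint X) h1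
      simpa [ContinuousLinearMap.mul_def, ContinuousLinearMap.adjoint_comp,
        ContinuousLinearMap.one_def, ContinuousLinearMap.adjoint_id] using this
    have hv : ContinuousLinearMap.adjoint Bi
        (ContinuousLinearMap.adjoint (a - H (w i)) v) = v := by
      have := congrArg (fun f : ℓ2 →L[ℂ] ℓ2 => f v) hBA'
      simpa [ContinuousLinearMap.mul_apply] using this
    have hBnorm : ‖ContinuousLinearMap.adjoint Bi‖ ≤ C := by
      rw [show ‖ContinuousLinearMap.adjoint Bi‖ = ‖Bi‖ from
        LinearIsometryEquiv.norm_map _ Bi]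
      exact h3
    calc ‖v‖ = ‖ContinuousLinearMap.adjoint Bi
          (ContinuousLinearMap.adjoint (a - H (w i)) v)‖ := by rw [hv]
      _ ≤ ‖ContinuousLinearMap.adjoint Bi‖ * ‖ContinuousLinearMap.adjoint (a - H (w i)) v‖ :=
          (ContinuousLinearMap.adjoint Bi).le_opNorm _
      _ ≤ C * ‖ContinuousLinearMap.adjoint (a - H (w i)) v‖ :=
          mul_le_mul_of_nonneg_right hBnorm (norm_nonneg _)
  -- conclude invertibility of A
  have hanti : AntilipschitzWith C.toNNReal A :=
    A.antilipschitz_of_bound fun u => by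
      rw [Real.coe_toNNReal C hC0]; exact hlbA u
  have hinj : LinearMap.ker (A : ℓ2 →ₗ[ℂ] ℓ2) = ⊥ := (LinearMap.ker_eq_bot (f := (A : ℓ2 →ₗ[ℂ] ℓ2))).mpr hanti.injective
  have hclosed : IsClosed (Set.range A) := hanti.isClosed_range A.uniformContinuous
  have hrange : LinearMap.range (A : ℓ2 →ₗ[ℂ] ℓ2) = ⊤ := by
    have hcl : IsClosed ((LinearMap.range (A : ℓ2 →ₗ[ℂ] ℓ2) : Submodule ℂ ℓ2) : Set ℓ2) := by
      rw [LinearMap.coe_range]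
      exact hclosed
    haveI : CompleteSpace (LinearMap.range (A : ℓ2 →ₗ[ℂ] ℓ2)) := hcl.completeSpace_coe
    rw [← Submodule.orthogonal_eq_bot_iff]
    rw [Submodule.eq_bot_iff]
    intro v hv
    rw [Submodule.mem_orthogonal] at hv
    have hAv : ContinuousLinearMap.adjoint A v = 0 := by
      have h0 : ∀ u : ℓ2, (inner ℂ u (ContinuousLinearMap.adjoint A v) : ℂ) = 0 := by
        intro u
        rw [ContinuousLinearMap.adjoint_inner_right]
        exact hv _ (LinearMap.mem_range_self _ u)
      have := h0 (ContinuousLinearMap.adjoint A v)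
      rwa [inner_self_eq_zero] at this
    have hle := hlbAadj v
    rw [hAv, norm_zero, mul_zero] at hle
    exact norm_le_zero_iff.mp hle
  let eqv := ContinuousLinearEquiv.ofBijective A hinj hrange
  have hco : (eqv : ℓ2 →L[ℂ] ℓ2) = A := ContinuousLinearEquiv.coe_ofBijective A hinj hrange
  have h1 : A * (eqv.symm : ℓ2 →L[ℂ] ℓ2) = 1 := by
    ext v
    have h2 : A ((eqv.symm : ℓ2 →L[ℂ] ℓ2) v) = eqv (eqv.symm v) := by
      rw [← hco]; rfl
    rw [ContinuousLinearMap.mul_apply, h2, eqv.apply_symm_apply, ContinuousLinearMap.one_apply]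
  have h2 : (eqv.symm : ℓ2 →L[ℂ] ℓ2) * A = 1 := by
    ext v
    have h3 : A v = eqv v := by rw [← hco]; rfl
    have h4 : (eqv.symm : ℓ2 →L[ℂ] ℓ2) (eqv v) = v := eqv.symm_apply_apply v
    rw [ContinuousLinearMap.mul_apply, h3, h4, ContinuousLinearMap.one_apply]
  exact ⟨⟨A, (eqv.symm : ℓ2 →L[ℂ] ℓ2), h1, h2⟩, rfl⟩
end SpectrumConstantAux
end

section
/- Let M_+(θ,E) = −F_+(1,θ,E) where F_+ is the unique matrix-valued solution of the strip eigenequation C* F_+(k−1) + C F_+(k+1) + B(T^k θ) F_+(k) = E F_+(k) with F_+(0) = I_d and Σ_{k≥0} ‖F_+(k)‖² < ∞. Then M_+ satisfies the Riccati equation C·M_+(Tⁿθ,E) + C*·M_+(T^{n−1}θ,E)^{-1} + (E·I − B(Tⁿθ)) = 0 for all n ∈ ℤ. -/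
open Matrix

attribute [local instance] Matrix.normedAddCommGroup

/-- Riccati equation for the `M₊` matrix of a strip Schrödinger operator:
`M₊(θ,E) = −F₊(1,θ,E)` where `F₊` is the matrix solution of
`Cᴴ F₊(k−1) + C F₊(k+1) + B(Tᵏθ) F₊(k) = E F₊(k)` with `F₊(0) = I` and
square-summable at `+∞`; then `C M₊(Tⁿθ) + Cᴴ M₊(Tⁿ⁻¹θ)⁻¹ + (E·I − B(Tⁿθ)) = 0`
for all `n ∈ ℤ`. -/
theorem riccati_equation_M_plus
    {Ω : Type*} (d : ℕ) (T : Equiv.Perm Ω)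
    (C : Matrix (Fin d) (Fin d) ℂ) (hC : IsUnit C.det)
    (hCtri : C.BlockTriangular id)  -- C upper triangular
    (B : Ω → Matrix (Fin d) (Fin d) ℂ)
    (hB : ∀ θ, (B θ).IsHermitian)
    (E : ℂ) (hE : 0 < E.im)
    (F : ℤ → Ω → Matrix (Fin d) (Fin d) ℂ)
    (hF0 : ∀ θ, F 0 θ = 1)
    (hrec : ∀ (k : ℤ) (θ : Ω),
      Cᴴ * F (k - 1) θ + C * F (k + 1) θ + B ((T ^ k) θ) * F k θ = E • F k θ)
    (hl2 : ∀ θ, Summable (fun k : ℕ => ‖F (k : ℤ) θ‖ ^ 2))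
    (hcocycle : ∀ (m n : ℤ) (θ : Ω), F (m + n) θ = F m ((T ^ n) θ) * F n θ)
    (M : Ω → Matrix (Fin d) (Fin d) ℂ)
    (hM : ∀ θ, M θ = -(F 1 θ))
    (hMinv : ∀ θ, IsUnit (M θ).det) :
    ∀ (n : ℤ) (θ : Ω),
      C * M ((T ^ n) θ) + Cᴴ * (M ((T ^ (n - 1)) θ))⁻¹
        + (E • (1 : Matrix (Fin d) (Fin d) ℂ) - B ((T ^ n) θ)) = 0 := by
  intro n θ
  set θ' := (T ^ n) θ with hθ'
  have hprev : (T ^ (n - 1)) θ = (T ^ (-1 : ℤ)) θ' := by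
    rw [hθ', ← Equiv.Perm.mul_apply, ← _root_.zpow_add]
    ring_nf
  -- F (-1) θ' is the inverse of F 1 (T⁻¹ θ')
  have hone : F 1 ((T ^ (-1 : ℤ)) θ') * F (-1) θ' = 1 := by
    have := hcocycle 1 (-1) θ'
    simpa [hF0] using this.symm
  have hFinv : F (-1) θ' = (F 1 ((T ^ (-1 : ℤ)) θ'))⁻¹ :=
    (Matrix.inv_eq_right_inv hone).symm
  have hrec0 := hrec 0 θ'
  simp only [hF0, zpow_zero, Equiv.Perm.coe_one, id_eq, mul_one, smul_eq_mul] at hrec0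
  have key : Cᴴ * F (-1) θ' + C * F (1) θ' + B θ' = E • 1 := by
    simpa using hrec0
  have hMθ : M θ' = -(F 1 θ') := hM θ'
  have hMprev : M ((T ^ (n - 1)) θ) = -(F 1 ((T ^ (-1 : ℤ)) θ')) := by
    rw [hprev]; exact hM _
  have hMprevinv : (M ((T ^ (n - 1)) θ))⁻¹ = -(F (-1) θ') := by
    apply Matrix.inv_eq_right_inv
    rw [hMprev, neg_mul_neg, hone]
  rw [hMθ, hMprevinv, hθ', mul_neg, mul_neg]
  rw [show (T ^ n) θ = θ' from hθ'.symm, ← key]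
  abel
end

section
/- Under the Riccati relations CM_+(θ,E) + C*M_+^{-1}(T^{-1}θ,E) + (E − B(θ)) = 0 and C*M_−(θ,E) + CM_−^{-1}(Tθ,E) + (E − B(θ)) = 0, the Green's matrix G(θ,E) = (−CM_+(θ,E) − C*M_−(θ,E) + B(θ) − E)^{-1} satisfies: G(θ,E) = (−CM_+(θ,E) + CM_−^{-1}(Tθ,E))^{-1}, G(Tθ,E) = (C*M_+^{-1}(θ,E) − C*M_−(Tθ,E))^{-1}, and G(θ,E)·C·M_−^{-1}(Tθ,E) = M_−(Tθ,E)·G(Tθ,E)·C* + I_d. -/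
open Matrix

/-- Algebraic relations between the `M` matrices and the Green's matrix: under
the Riccati equations for `M₊` and `M₋`, the Green's matrix
`G(θ) = (−C M₊(θ) − Cᴴ M₋(θ) + B(θ) − E)⁻¹` satisfies
`G(θ) = (−C M₊(θ) + C M₋(Tθ)⁻¹)⁻¹`,
`G(Tθ) = (Cᴴ M₊(θ)⁻¹ − Cᴴ M₋(Tθ))⁻¹`, and the shift identity
`G(θ) C M₋(Tθ)⁻¹ = M₋(Tθ) G(Tθ) Cᴴ + I`. -/
theorem green_matrix_M_matrix_relations
    {Ω : Type*} (d : ℕ) (T : Equiv.Perm Ω)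
    (C : Matrix (Fin d) (Fin d) ℂ) (hC : IsUnit C.det)
    (B : Ω → Matrix (Fin d) (Fin d) ℂ)
    (E : ℂ)
    (Mp Mm G : Ω → Matrix (Fin d) (Fin d) ℂ)
    (hMp : ∀ θ, IsUnit (Mp θ).det)
    (hMm : ∀ θ, IsUnit (Mm θ).det)
    (hRp : ∀ θ : Ω, C * Mp θ + Cᴴ * (Mp (T.symm θ))⁻¹
      + (E • (1 : Matrix (Fin d) (Fin d) ℂ) - B θ) = 0)
    (hRm : ∀ θ : Ω, Cᴴ * Mm θ + C * (Mm (T θ))⁻¹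
      + (E • (1 : Matrix (Fin d) (Fin d) ℂ) - B θ) = 0)
    (hGdef : ∀ θ : Ω, G θ = (-(C * Mp θ) - Cᴴ * Mm θ + B θ
      - E • (1 : Matrix (Fin d) (Fin d) ℂ))⁻¹)
    (hGinv : ∀ θ : Ω, IsUnit (-(C * Mp θ) - Cᴴ * Mm θ + B θ
      - E • (1 : Matrix (Fin d) (Fin d) ℂ)).det) :
    ∀ θ : Ω,
      G θ = (-(C * Mp θ) + C * (Mm (T θ))⁻¹)⁻¹ ∧
      G (T θ) = (Cᴴ * (Mp θ)⁻¹ - Cᴴ * Mm (T θ))⁻¹ ∧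
      G θ * C * (Mm (T θ))⁻¹ = Mm (T θ) * G (T θ) * Cᴴ + 1 := by
  intro θ
  have hCH : IsUnit (Cᴴ).det := by
    rw [Matrix.det_conjTranspose]; exact hC.star
  -- abbreviations
  have hA1 : (-(C * Mp θ) - Cᴴ * Mm θ + B θ - E • (1 : Matrix (Fin d) (Fin d) ℂ))
      = -(C * Mp θ) + C * (Mm (T θ))⁻¹ := by
    have h := hRm θ
    have h1 : Cᴴ * Mm θ + C * (Mm (T θ))⁻¹
        = -(E • (1 : Matrix (Fin d) (Fin d) ℂ) - B θ) := by
      rwa [add_eq_zero_iff_eq_neg] at h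
    have hq : Cᴴ * Mm θ
        = -(E • (1 : Matrix (Fin d) (Fin d) ℂ) - B θ) - C * (Mm (T θ))⁻¹ :=
      eq_sub_of_add_eq h1
    rw [hq]; abel
  have hA2 : (-(C * Mp (T θ)) - Cᴴ * Mm (T θ) + B (T θ)
        - E • (1 : Matrix (Fin d) (Fin d) ℂ))
      = Cᴴ * (Mp θ)⁻¹ - Cᴴ * Mm (T θ) := by
    have h := hRp (T θ)
    rw [Equiv.symm_apply_apply] at h
    have h1 : C * Mp (T θ) + Cᴴ * (Mp θ)⁻¹
        = -(E • (1 : Matrix (Fin d) (Fin d) ℂ) - B (T θ)) := by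
      rwa [add_eq_zero_iff_eq_neg] at h
    have hp : C * Mp (T θ)
        = -(E • (1 : Matrix (Fin d) (Fin d) ℂ) - B (T θ)) - Cᴴ * (Mp θ)⁻¹ :=
      eq_sub_of_add_eq h1
    rw [hp]; abel
  set X : Matrix (Fin d) (Fin d) ℂ := -(C * Mp θ) + C * (Mm (T θ))⁻¹ with hXdef
  set Y : Matrix (Fin d) (Fin d) ℂ := Cᴴ * (Mp θ)⁻¹ - Cᴴ * Mm (T θ) with hYdef
  have hX : IsUnit X.det := hA1 ▸ hGinv θ
  have hY : IsUnit Y.det := hA2 ▸ hGinv (T θ)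
  have hG1 : G θ = X⁻¹ := by rw [hGdef θ, hA1]
  have hG2 : G (T θ) = Y⁻¹ := by rw [hGdef (T θ), hA2]
  refine ⟨hG1, hG2, ?_⟩
  -- key algebraic identity
  have key : C * Mp θ * (Cᴴ)⁻¹ * Y = X * Mm (T θ) := by
    have e1 : ∀ Z : Matrix (Fin d) (Fin d) ℂ, (Cᴴ)⁻¹ * (Cᴴ * Z) = Z := by
      intro Z; rw [← Matrix.mul_assoc, Matrix.nonsing_inv_mul _ hCH, Matrix.one_mul]
    have e2 : Mp θ * (Mp θ)⁻¹ = 1 := Matrix.mul_nonsing_inv _ (hMp θ)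
    have e3 : (Mm (T θ))⁻¹ * Mm (T θ) = 1 := Matrix.nonsing_inv_mul _ (hMm (T θ))
    rw [hXdef, hYdef]
    simp only [Matrix.mul_sub, Matrix.add_mul, Matrix.neg_mul, Matrix.mul_assoc,
      e1, e2, e3, Matrix.mul_one]
    abel
  have key2 : X⁻¹ * (C * Mp θ) = Mm (T θ) * Y⁻¹ * Cᴴ := by
    have h1 : C * Mp θ * (Cᴴ)⁻¹ = X * Mm (T θ) * Y⁻¹ := by
      calc C * Mp θ * (Cᴴ)⁻¹
          = C * Mp θ * (Cᴴ)⁻¹ * (Y * Y⁻¹) := by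
            rw [Matrix.mul_nonsing_inv _ hY, Matrix.mul_one]
        _ = (C * Mp θ * (Cᴴ)⁻¹ * Y) * Y⁻¹ := by noncomm_ring
        _ = X * Mm (T θ) * Y⁻¹ := by rw [key]
    have h2 : C * Mp θ = X * (Mm (T θ) * Y⁻¹ * Cᴴ) := by
      calc C * Mp θ = C * Mp θ * ((Cᴴ)⁻¹ * Cᴴ) := by
            rw [Matrix.nonsing_inv_mul _ hCH, Matrix.mul_one]
        _ = (C * Mp θ * (Cᴴ)⁻¹) * Cᴴ := by noncomm_ring
        _ = X * (Mm (T θ) * Y⁻¹ * Cᴴ) := by rw [h1]; noncomm_ring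
    rw [h2, ← Matrix.mul_assoc, Matrix.nonsing_inv_mul _ hX, Matrix.one_mul]
  have hCMm : C * (Mm (T θ))⁻¹ = X + C * Mp θ := by rw [hXdef]; abel
  rw [hG1, hG2, Matrix.mul_assoc, hCMm, Matrix.mul_add,
    Matrix.nonsing_inv_mul _ hX, key2]
  abel
end
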